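/- arXiv:2202.07691 — 2 statements merged into one kernel-verified Lean document; each statement's English description precedes it below -/
import Mathlib

section
/- Suppose Φ, u_i : A → ℝ (with A = A_1 × ⋯ × A_n a finite product) satisfy Φ(a_i, a_{-i}) - Φ(a_i', a_{-i}) = u_i(a_i, a_{-i}) - u_i(a_i', a_{-i}) for all i, a, a_i'. Then any maximizer a* of Φ over A is a pure-strategy Nash equilibrium: u_i(a*) ≥ u_i(a_i', a*_{-i}) for all i and a_i' ∈ A_i. -/
theorem potential_maximizer_is_nash {n : ℕ} (A : Fin n → Type*)
    [∀ i, Fintype (A i)] [∀ i, Nonempty (A i)]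
    (Φ : (∀ i, A i) → ℝ) (u : ∀ i : Fin n, (∀ j, A j) → ℝ)
    (hpot : ∀ (i : Fin n) (a : ∀ j, A j) (a_i' : A i),
      Φ a - Φ (Function.update a i a_i') = u i a - u i (Function.update a i a_i'))
    (astar : ∀ i, A i) (hmax : ∀ a : ∀ i, A i, Φ a ≤ Φ astar) :
    ∀ (i : Fin n) (a_i' : A i), u i (Function.update astar i a_i') ≤ u i astar := by
  intro i a_i'
  have h := hpot i astar a_i'
  have h2 := hmax (Function.update astar i a_i')
  linarith
end

section
/- Every finite exact potential game admits at least one pure-strategy Nash equilibrium. -/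
theorem finite_potential_game_has_nash {n : ℕ} (A : Fin n → Type*)
    [∀ i, Fintype (A i)] [∀ i, Nonempty (A i)]
    (u : ∀ i : Fin n, (∀ j, A j) → ℝ) (Φ : (∀ i, A i) → ℝ)
    (hpot : ∀ (i : Fin n) (a : ∀ j, A j) (a_i' : A i),
      Φ a - Φ (Function.update a i a_i') = u i a - u i (Function.update a i a_i')) :
    ∃ astar : ∀ i, A i, ∀ (i : Fin n) (a_i' : A i),
      u i (Function.update astar i a_i') ≤ u i astar := by
  obtain ⟨a, ha⟩ := Finite.exists_max Φ
  exact ⟨a, fun i a' => by have := hpot i a a'; linarith [ha (Function.update a i a')]⟩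
end
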